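/- arXiv:1410.2312 — 4 statements merged into one kernel-verified Lean document; each statement's English description precedes it below -/
import Mathlib

section
/- In the formal power series ring K[[t,u]] in two commuting variables over the field K = ℚ(q) of rational functions in q over ℚ, consider the series (1 − t)·(1 − q⁻¹t)⁻¹·(1 − tu)⁻¹·(1 − u)⁻¹ (the three inverted factors are units since they have constant coefficient 1). Then for all natural numbers i, j with i ≤ j, the coefficient of the monomial t^i·u^{i+j} in this series equals q^{−i}. -/
/-!
For `c` in a field (here `c = q⁻¹`), write `P = 1 - c t`, `Q = 1 - t u`, `R = 1 - u`.
Since `Q - t R = 1 - t`, the series splits as `(1 - t) / (P Q R) = 1 / (P R) - t / (P Q)`.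
The coefficient of `tᵃ uᵇ` in `1 / (P R)` is `cᵃ`, while `t / (P Q) = ∑ c^m t^(m + n + 1) uⁿ`
only has monomials `tᵃ uᵇ` with `b < a`.
-/

noncomputable section

local notation "K" => RatFunc ℚ

local notation "q" => (RatFunc.X : RatFunc ℚ)

namespace MvPowerSeries

variable {R : Type*}

def mk₂ (f : ℕ → ℕ → R) : MvPowerSeries (Fin 2) R := fun d => f (d 0) (d 1)

section Semiring

variable [Semiring R]

@[simp]
theorem coeff_mk₂ (f : ℕ → ℕ → R) (d : Fin 2 →₀ ℕ) : coeff d (mk₂ f) = f (d 0) (d 1) := rfl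

theorem one_eq_mk₂ :
    (1 : MvPowerSeries (Fin 2) R) = mk₂ fun a b => if a = 0 ∧ b = 0 then 1 else 0 := by
  ext d
  simp only [coeff_one, coeff_mk₂, Finsupp.ext_iff, Fin.forall_fin_two, Finsupp.coe_zero,
    Pi.zero_apply]

theorem C_mul_mk₂ (c : R) (f : ℕ → ℕ → R) : C c * mk₂ f = mk₂ fun a b => c * f a b := by
  ext d
  simp

theorem X_zero_mul_mk₂ (f : ℕ → ℕ → R) :
    X 0 * mk₂ f = mk₂ fun a b => if a = 0 then 0 else f (a - 1) b := by
  ext d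
  rw [X, coeff_monomial_mul]
  simp [Finsupp.le_def, Fin.forall_fin_two, Nat.one_le_iff_ne_zero, ite_not]

theorem X_one_mul_mk₂ (f : ℕ → ℕ → R) :
    X 1 * mk₂ f = mk₂ fun a b => if b = 0 then 0 else f a (b - 1) := by
  ext d
  rw [X, coeff_monomial_mul]
  simp [Finsupp.le_def, Fin.forall_fin_two, Nat.one_le_iff_ne_zero, ite_not]

end Semiring

theorem mk₂_sub [Ring R] (f g : ℕ → ℕ → R) :
    mk₂ (fun a b => f a b - g a b) = mk₂ f - mk₂ g := rfl

section Field

variable {k : Type*} [Field k]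

theorem inv_one_sub_C_mul_X_zero (c : k) :
    (1 - C c * X 0)⁻¹ = mk₂ fun a b => if b = 0 then c ^ a else 0 := by
  rw [MvPowerSeries.inv_eq_iff_mul_eq_one (by simp), mul_comm, sub_mul, one_mul, mul_assoc,
    X_zero_mul_mk₂, C_mul_mk₂, ← mk₂_sub, one_eq_mk₂]
  congr! 3 with a b
  rcases a with _ | a <;> rcases b with _ | b <;> simp [pow_succ']

theorem inv_one_sub_C_mul_X_zero_mul_inv_one_sub_X_one (c : k) :
    (1 - C c * X 0)⁻¹ * (1 - X 1)⁻¹ = mk₂ fun a _ => c ^ a := by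
  rw [eq_comm, MvPowerSeries.eq_mul_inv_iff_mul_eq (by simp), inv_one_sub_C_mul_X_zero, mul_comm,
    sub_mul, one_mul, X_one_mul_mk₂, ← mk₂_sub]
  congr! 3 with a b
  rcases b with _ | b <;> simp

theorem inv_one_sub_C_mul_X_zero_mul_inv_one_sub_X_zero_mul_X_one (c : k) :
    (1 - C c * X 0)⁻¹ * (1 - X 0 * X 1)⁻¹ = mk₂ fun a b => if b ≤ a then c ^ (a - b) else 0 := by
  rw [eq_comm, MvPowerSeries.eq_mul_inv_iff_mul_eq (by simp), inv_one_sub_C_mul_X_zero, mul_comm,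
    sub_mul, one_mul, mul_assoc, X_one_mul_mk₂, X_zero_mul_mk₂, ← mk₂_sub]
  congr! 3 with a b
  rcases a with _ | a <;> rcases b with _ | b <;> simp

theorem one_sub_X_zero_mul_inv_eq_sub (c : k) :
    (1 - X 0 : MvPowerSeries (Fin 2) k) * (1 - C c * X 0)⁻¹ * (1 - X 0 * X 1)⁻¹ * (1 - X 1)⁻¹ =
      (1 - C c * X 0)⁻¹ * (1 - X 1)⁻¹ - X 0 * ((1 - C c * X 0)⁻¹ * (1 - X 0 * X 1)⁻¹) := by
  have hQ := MvPowerSeries.mul_inv_cancel (1 - X 0 * X 1 : MvPowerSeries (Fin 2) k) (by simp)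
  have hR := MvPowerSeries.mul_inv_cancel (1 - X 1 : MvPowerSeries (Fin 2) k) (by simp)
  linear_combination (1 - C c * X 0)⁻¹ * (1 - X 1)⁻¹ * hQ
    - (X 0 * (1 - C c * X 0)⁻¹ * (1 - X 0 * X 1)⁻¹) * hR

theorem coeff_one_sub_X_zero_mul_inv_of_le (c : k) {a b : ℕ} (hab : a ≤ b) :
    coeff (Finsupp.single (0 : Fin 2) a + Finsupp.single 1 b)
      ((1 - X 0) * (1 - C c * X 0)⁻¹ * (1 - X 0 * X 1)⁻¹ * (1 - X 1)⁻¹) = c ^ a := by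
  rw [one_sub_X_zero_mul_inv_eq_sub, inv_one_sub_C_mul_X_zero_mul_inv_one_sub_X_one,
    inv_one_sub_C_mul_X_zero_mul_inv_one_sub_X_zero_mul_X_one, X_zero_mul_mk₂, map_sub]
  simp +contextual [Nat.le_sub_one_iff_lt, Nat.pos_of_ne_zero, hab.not_gt]

end Field

end MvPowerSeries

theorem inverse_satake_std_GL2_general (i j : ℕ) :
    MvPowerSeries.coeff (R := K) (Finsupp.single (0 : Fin 2) i + Finsupp.single (1 : Fin 2) (i + j))
      ((1 - MvPowerSeries.X 0)
        * (1 - MvPowerSeries.C (σ := Fin 2) (R := K) q⁻¹ * MvPowerSeries.X 0)⁻¹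
        * (1 - MvPowerSeries.X 0 * MvPowerSeries.X 1)⁻¹
        * (1 - MvPowerSeries.X 1)⁻¹)
      = q⁻¹ ^ i :=
  MvPowerSeries.coeff_one_sub_X_zero_mul_inv_of_le _ (Nat.le_add_right i j)

/-- The Godement–Jacquet computation for `GL₂`: in `K[[t,u]]`, the coefficient of
`t^i u^(i+j)` (for `i ≤ j`, corresponding to the antidominant coweight `z₁^i z₂^j`
under `z₁ = tu`, `z₂ = u`) of the series
`(1 − t)·(1 − q⁻¹ t)⁻¹·(1 − tu)⁻¹·(1 − u)⁻¹` equals `q^(−i)`. -/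
theorem inverse_satake_std_GL2 (i j : ℕ) (hij : i ≤ j) :
    MvPowerSeries.coeff (R := K) (Finsupp.single (0 : Fin 2) i + Finsupp.single (1 : Fin 2) (i + j))
      ((1 - MvPowerSeries.X 0)
        * (1 - MvPowerSeries.C (σ := Fin 2) (R := K) q⁻¹ * MvPowerSeries.X 0)⁻¹
        * (1 - MvPowerSeries.X 0 * MvPowerSeries.X 1)⁻¹
        * (1 - MvPowerSeries.X 1)⁻¹)
      = q⁻¹ ^ i :=
  inverse_satake_std_GL2_general i j
end
end

section
/- Fix n ≥ 1 and work in the formal power series ring over K = ℚ(q) in the n variables X₁,…,X_{n−1},U. For 1 ≤ i < j ≤ n set m_{ij} := X_i X_{i+1} ⋯ X_{j−1}, and for 1 ≤ i ≤ n set z_i := X_i X_{i+1} ⋯ X_{n−1} · U (so z_n = U). Then for every λ ∈ ℕ^n with λ₁ ≤ λ₂ ≤ ⋯ ≤ λ_n, the coefficient of the monomial ∏_{k=1}^{n−1} X_k^{λ₁+⋯+λ_k} · U^{λ₁+⋯+λ_n} in the series ∏_{1≤i<j≤n} (1 − m_{ij})·(1 − q⁻¹ m_{ij})⁻¹ ·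 ∏_{i=1}^{n} (1 − z_i)⁻¹ equals ∏_{i=1}^{n} q^{−(n−i)λ_i}. -/
noncomputable section

/-- The field `K = ℚ(q)` of rational functions over `ℚ`. -/
local notation "K" => RatFunc ℚ

/-- The variable `q` of `K = ℚ(q)`. -/
local notation "q" => (RatFunc.X : RatFunc ℚ)

namespace InverseSatakeGLn

variable (m : ℕ)

/-- The `n = m + 1` variables `X₁, …, X_{n−1}, U` of the power series ring: the variable of
index `k < m` is `X_{k+1}`, and the variable of index `m` is `U`. -/
def V (k : Fin (m + 1)) : MvPowerSeries (Fin (m + 1)) K := MvPowerSeries.X k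

/-- `m i j = Xᵢ X_{i+1} ⋯ X_{j−1}` (zero-based: the product of the variables with indices in
`[i, j)`, all of which are `X`-variables when `i < j`). -/
def mon (i j : Fin (m + 1)) : MvPowerSeries (Fin (m + 1)) K :=
  ∏ k ∈ Finset.Ico i j, V m k

/-- `z i = Xᵢ X_{i+1} ⋯ X_{n−1} · U` (zero-based: the product of the variables with indices
`≥ i`; in particular `z (last) = U`). -/
def z (i : Fin (m + 1)) : MvPowerSeries (Fin (m + 1)) K :=
  ∏ k ∈ Finset.Ici i, V m k


/-!
Write `c = q⁻¹`, index the variables from `0` (so `x_m = U`) and group the factors by rows: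
row `a` is `∏_{b > a} (1 - m_{ab})(1 - c m_{ab})⁻¹ · (1 - z_a)⁻¹`, a series in the variables of
index `≥ a`. By descending induction on `a`, the coefficient of `x^e` in the product of the rows
after `a` is `c ^ (e_0 + ⋯ + e_{m-1})` for every monotone `e` vanishing up to `a`. In row `a` the
factor `(1 - z_a)⁻¹` has to supply the whole power of `x_a`, which leaves a monotone exponent;
the factors `(1 - y)(1 - c y)⁻¹`, `y = m_{ab}`, are then added for `b = m, m - 1, …, a + 1`.
At each stage the coefficient is `c` to a linear form in `e` that is constant along the rays
`e + ℕ • deg y`, and on such a ray `(1 - y)(1 - c y)⁻¹` multiplies the coefficient by `c ^ e_a`.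
-/

open MvPowerSeries Finset

section Ray

variable {σ R : Type*} [CommRing R] {d e : σ →₀ ℕ}

lemma coeff_one_sub_monomial_mul_of_not_le (hde : ¬ d ≤ e) (c : R) (φ : MvPowerSeries σ R) :
    coeff e ((1 - monomial d c) * φ) = coeff e φ := by
  rw [sub_mul, one_mul, map_sub, coeff_monomial_mul, if_neg hde, sub_zero]

lemma coeff_add_one_sub_monomial_mul (c : R) (φ : MvPowerSeries σ R) :
    coeff (d + e) ((1 - monomial d c) * φ) = coeff (d + e) φ - c * coeff e φ := by
  rw [sub_mul, one_mul, map_sub, coeff_add_monomial_mul]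

lemma coeff_add_nsmul_of_one_sub_monomial_mul_eq {c : R} {φ ψ : MvPowerSeries σ R}
    (h : (1 - monomial d c) * φ = ψ) (hde : ¬ d ≤ e) (N : ℕ)
    (hψ : ∀ k, 0 < k → k ≤ N → coeff (e + k • d) ψ = 0) :
    coeff (e + N • d) φ = c ^ N * coeff e ψ := by
  induction N with
  | zero =>
    rw [zero_smul, add_zero, pow_zero, one_mul, ← h, coeff_one_sub_monomial_mul_of_not_le hde]
  | succ N ih =>
    have hstep := coeff_add_one_sub_monomial_mul (d := d) (e := e + N • d) c φ
    rw [h, show d + (e + N • d) = e + (N + 1) • d by rw [succ_nsmul]; abel,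
      hψ (N + 1) N.succ_pos le_rfl, ih fun k hk hkN => hψ k hk (by omega)] at hstep
    rw [pow_succ']
    linear_combination -hstep

lemma coeff_add_nsmul_of_coeff_const_on_ray {c : R} {φ ψ : MvPowerSeries σ R}
    (h : (1 - monomial d c) * φ = (1 - monomial d 1) * ψ) (hde : ¬ d ≤ e) (N : ℕ)
    (hψ : ∀ k ≤ N, coeff (e + k • d) ψ = coeff e ψ) :
    coeff (e + N • d) φ = c ^ N * coeff e ψ := by
  rw [coeff_add_nsmul_of_one_sub_monomial_mul_eq h hde N,
    coeff_one_sub_monomial_mul_of_not_le hde]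
  rintro (_ | k) hk hkN
  · exact absurd hk (lt_irrefl 0)
  have hsucc : d + (e + k • d) = e + (k + 1) • d := by rw [succ_nsmul]; abel
  rw [← hsucc, coeff_add_one_sub_monomial_mul, one_mul, hsucc, hψ k (by omega), hψ (k + 1) hkN,
    sub_self]

end Ray

lemma one_sub_monomial_mul_inv_mul {σ k : Type*} [Field k] {d : σ →₀ ℕ} (hd : d ≠ 0) (c : k)
    (φ : MvPowerSeries σ k) : (1 - monomial d c) * ((1 - monomial d c)⁻¹ * φ) = φ := by
  classical
  rw [← mul_assoc, MvPowerSeries.mul_inv_cancel, one_mul]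
  rw [map_sub, map_one, ← coeff_zero_eq_constantCoeff_apply, coeff_monomial, if_neg hd.symm,
    sub_zero]
  exact one_ne_zero

section Rename

variable {σ τ k : Type*} [Field k] (f : σ → τ) [Filter.TendstoCofinite f]

lemma rename_inv (φ : MvPowerSeries σ k) : rename f φ⁻¹ = (rename f φ)⁻¹ := by
  by_cases h : constantCoeff φ = 0
  · rw [MvPowerSeries.inv_eq_zero.mpr h, MvPowerSeries.inv_eq_zero.mpr
      (by rwa [constantCoeff_rename]), map_zero]
  · rw [MvPowerSeries.eq_inv_iff_mul_eq_one (by rwa [constantCoeff_rename]), ← map_mul,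
      MvPowerSeries.inv_mul_cancel _ h, map_one]

lemma inv_mem_range_rename {φ : MvPowerSeries τ k} (hφ : φ ∈ (rename f).range) :
    φ⁻¹ ∈ (rename (R := k) f).range := by
  obtain ⟨ψ, rfl⟩ := hφ
  exact ⟨ψ⁻¹, rename_inv f ψ⟩

lemma coeff_eq_zero_of_mem_range_rename {φ : MvPowerSeries τ k} (hφ : φ ∈ (rename f).range)
    {x : τ →₀ ℕ} {t : τ} (ht : t ∉ Set.range f) (hx : x t ≠ 0) : coeff x φ = 0 := by
  obtain ⟨ψ, rfl⟩ := hφ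
  refine coeff_rename_eq_zero f ψ ?_
  rintro ⟨y, rfl⟩
  exact hx (Finsupp.mapDomain_of_notMem_range y t ht)

end Rename

section Exponents

variable {σ : Type*} {e : σ →₀ ℕ} {a : σ} {s : Finset σ}

def onesOn (s : Finset σ) : σ →₀ ℕ := ∑ k ∈ s, Finsupp.single k 1

lemma onesOn_apply [DecidableEq σ] (s : Finset σ) (k : σ) :
    onesOn s k = if k ∈ s then 1 else 0 := by
  simp [onesOn, Finsupp.finsetSum_apply, Finsupp.single_apply]

lemma prod_X_eq_monomial_onesOn {R : Type*} [CommSemiring R] (s : Finset σ) :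
    ∏ k ∈ s, (X k : MvPowerSeries σ R) = monomial (onesOn s) 1 := by
  simp only [X_def, prod_monomial, prod_const_one, onesOn]

lemma not_onesOn_le (ha : a ∈ s) {x : σ →₀ ℕ} (hx : x a = 0) :
    ¬ onesOn s ≤ x := by
  classical
  exact fun h => by simpa [onesOn_apply, ha, hx] using h a

lemma onesOn_ne_zero (ha : a ∈ s) : onesOn s ≠ 0 :=
  fun h => not_onesOn_le ha rfl h.le

lemma sub_nsmul_onesOn_apply_self (ha : a ∈ s) :
    (e - e a • onesOn s) a = 0 := by
  classical
  simp [onesOn_apply, ha]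

lemma sub_nsmul_onesOn_add_nsmul {N k : ℕ} (he : ∀ x ∈ s, N ≤ e x) (hk : k ≤ N) :
    e - N • onesOn s + k • onesOn s = e - (N - k) • onesOn s := by
  classical
  ext x
  simp only [Finsupp.add_apply, Finsupp.tsub_apply, Finsupp.smul_apply, onesOn_apply,
    smul_eq_mul]
  by_cases hx : x ∈ s
  · have := he x hx
    simp only [hx, if_true, mul_one]
    omega
  · simp [hx]

variable [LinearOrder σ]

lemma monotone_sub_nsmul_onesOn (he : Monotone e) (hea : ∀ k < a, e k = 0)
    (hs : ∀ x y, a ≤ x → x ≤ y → y ∈ s → x ∈ s) (t : ℕ) :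
    Monotone ⇑(e - t • onesOn s) := by
  classical
  intro x y hxy
  have hexy := he hxy
  simp only [Finsupp.tsub_apply, Finsupp.smul_apply, onesOn_apply, smul_eq_mul]
  by_cases hy : y ∈ s <;> by_cases hx : x ∈ s <;> simp only [hx, hy, if_true, if_false]
  · omega
  · rw [hea x (lt_of_not_ge fun hax => hx (hs x y hax hxy hy))]; omega
  · omega
  · omega

lemma sub_nsmul_onesOn_apply_of_lt (hea : ∀ k < a, e k = 0) (t : ℕ) {k : σ} (hk : k < a) :
    (e - t • onesOn s) k = 0 := by
  rw [Finsupp.tsub_apply, hea k hk, zero_tsub]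

end Exponents

variable (c : K)

lemma mon_eq_monomial (a b : Fin (m + 1)) : mon m a b = monomial (onesOn (Ico a b)) 1 :=
  prod_X_eq_monomial_onesOn _

lemma z_eq_monomial (a : Fin (m + 1)) : z m a = monomial (onesOn (Ici a)) 1 :=
  prod_X_eq_monomial_onesOn _

def corootFactor (a b : Fin (m + 1)) : MvPowerSeries (Fin (m + 1)) K :=
  (1 - mon m a b) * (1 - C c * mon m a b)⁻¹

def row (a : Fin (m + 1)) : MvPowerSeries (Fin (m + 1)) K :=
  (∏ b ∈ Ioi a, corootFactor m c a b) * (1 - z m a)⁻¹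

def rowsAfter (a : Fin (m + 1)) : MvPowerSeries (Fin (m + 1)) K :=
  ∏ b ∈ Ioi a, row m c b

def varsAfter (a : Fin (m + 1)) : Subalgebra K (MvPowerSeries (Fin (m + 1)) K) :=
  (rename (R := K) (Subtype.val : {k : Fin (m + 1) // a < k} → Fin (m + 1))).range

lemma prod_V_mem_varsAfter {a : Fin (m + 1)} {s : Finset (Fin (m + 1))} (hs : ∀ k ∈ s, a < k) :
    ∏ k ∈ s, V m k ∈ varsAfter m a :=
  Subalgebra.prod_mem _ fun k hk => ⟨X ⟨k, hs k hk⟩, rename_X _ _⟩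

lemma row_mem_varsAfter {a b : Fin (m + 1)} (hab : a < b) : row m c b ∈ varsAfter m a := by
  have hmon : ∀ j, mon m b j ∈ varsAfter m a := fun j =>
    prod_V_mem_varsAfter m fun k hk => hab.trans_le (mem_Ico.mp hk).1
  have hz : z m b ∈ varsAfter m a :=
    prod_V_mem_varsAfter m fun k hk => hab.trans_le (mem_Ici.mp hk)
  refine Subalgebra.mul_mem _ (Subalgebra.prod_mem _ fun j _ => ?_)
    (inv_mem_range_rename _ (Subalgebra.sub_mem _ (Subalgebra.one_mem _) hz))
  exact Subalgebra.mul_mem _ (Subalgebra.sub_mem _ (Subalgebra.one_mem _) (hmon j))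
    (inv_mem_range_rename _ (Subalgebra.sub_mem _ (Subalgebra.one_mem _)
      (Subalgebra.mul_mem _ (Subalgebra.algebraMap_mem _ c) (hmon j))))

lemma coeff_rowsAfter_eq_zero {a k : Fin (m + 1)} (hk : k ≤ a) {x : Fin (m + 1) →₀ ℕ}
    (hx : x k ≠ 0) : coeff x (rowsAfter m c a) = 0 :=
  coeff_eq_zero_of_mem_range_rename _
    (Subalgebra.prod_mem _ fun _ hb => row_mem_varsAfter m c (mem_Ioi.mp hb))
    (fun ⟨k', hk'⟩ => (hk'.symm ▸ k'.2).not_ge hk) hx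

def xDegree : (Fin (m + 1) →₀ ℕ) →+ ℕ := ∑ k ∈ Iio (Fin.last m), Finsupp.applyAddHom k

lemma xDegree_apply (e : Fin (m + 1) →₀ ℕ) : xDegree m e = ∑ k ∈ Iio (Fin.last m), e k := by
  simp [xDegree]

lemma xDegree_onesOn (s : Finset (Fin (m + 1))) :
    xDegree m (onesOn s) = #(Iio (Fin.last m) ∩ s) := by
  simp [xDegree_apply, onesOn_apply]

lemma xDegree_onesOn_Ico (a b : Fin (m + 1)) : xDegree m (onesOn (Ico a b)) = b - a := by
  rw [xDegree_onesOn, inter_eq_right.mpr, Fin.card_Ico]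
  exact fun k hk => mem_Iio.mpr ((mem_Ico.mp hk).2.trans_le (Fin.le_last b))

lemma xDegree_onesOn_Ici (a : Fin (m + 1)) : xDegree m (onesOn (Ici a)) = m - a := by
  have : Ici a ∩ Iio (Fin.last m) = Ico a (Fin.last m) := by
    rw [← coe_inj]; push_cast; exact Set.Ici_inter_Iio
  rw [xDegree_onesOn, inter_comm, this, Fin.card_Ico, Fin.val_last]

lemma coeff_inv_one_sub_z_mul {a : Fin (m + 1)} {H : MvPowerSeries (Fin (m + 1)) K}
    (hH₀ : ∀ x : Fin (m + 1) →₀ ℕ, x a ≠ 0 → coeff x H = 0)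
    (hH : ∀ e : Fin (m + 1) →₀ ℕ, Monotone e → (∀ k ≤ a, e k = 0) →
      coeff e H = c ^ xDegree m e)
    {e : Fin (m + 1) →₀ ℕ} (he : Monotone e) (hea : ∀ k < a, e k = 0) :
    coeff e ((1 - z m a)⁻¹ * H) = c ^ ((xDegree m e : ℤ) - (m - a) * e a) := by
  have has : a ∈ Ici a := mem_Ici.mpr le_rfl
  set d := onesOn (Ici a)
  set e₀ := e - e a • d
  have he₀a : e₀ a = 0 := sub_nsmul_onesOn_apply_self has
  have hdecomp : e₀ + e a • d = e := by
    rw [sub_nsmul_onesOn_add_nsmul (fun x hx => he (mem_Ici.mp hx)) le_rfl, Nat.sub_self,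
      zero_smul, tsub_zero]
  have hmono₀ : Monotone e₀ :=
    monotone_sub_nsmul_onesOn he hea (fun x _ hax _ _ => mem_Ici.mpr hax) _
  have hzero₀ : ∀ k ≤ a, e₀ k = 0 := fun k hk => by
    rcases hk.lt_or_eq with hk | rfl
    exacts [sub_nsmul_onesOn_apply_of_lt hea _ hk, he₀a]
  have hinv : (1 - monomial d 1) * ((1 - z m a)⁻¹ * H) = H := by
    rw [z_eq_monomial, one_sub_monomial_mul_inv_mul (onesOn_ne_zero has)]
  have hvanish : ∀ k, 0 < k → k ≤ e a → coeff (e₀ + k • d) H = 0 := fun k hk _ =>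
    hH₀ _ (by simp [d, he₀a, onesOn_apply]; omega)
  rw [← hdecomp, coeff_add_nsmul_of_one_sub_monomial_mul_eq hinv (not_onesOn_le has he₀a) (e a)
    hvanish, one_pow, one_mul, hH e₀ hmono₀ hzero₀, ← zpow_natCast]
  congr 1
  rw [map_add, map_nsmul, xDegree_onesOn_Ici, smul_eq_mul, Finsupp.add_apply, Finsupp.smul_apply,
    he₀a, show d a = 1 by simp [d, onesOn_apply]]
  push_cast [Nat.cast_sub a.is_le, smul_eq_mul]
  ring

lemma corootFactor_mul (a b : Fin (m + 1)) (P : MvPowerSeries (Fin (m + 1)) K) :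
    corootFactor m c a b * P = (1 - monomial (onesOn (Ico a b)) 1) *
      ((1 - monomial (onesOn (Ico a b)) c)⁻¹ * P) := by
  rw [corootFactor, mon_eq_monomial, ← monomial_zero_eq_C_apply, monomial_mul_monomial, zero_add,
    mul_one]
  ring

lemma coeff_corootFactor_mul {a b : Fin (m + 1)} (hab : a < b) {P : MvPowerSeries (Fin (m + 1)) K}
    (hP : ∀ e : Fin (m + 1) →₀ ℕ, Monotone e → (∀ k < a, e k = 0) →
      coeff e P = c ^ ((xDegree m e : ℤ) - (b - a) * e a))
    {e : Fin (m + 1) →₀ ℕ} (he : Monotone e) (hea : ∀ k < a, e k = 0) :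
    coeff e (corootFactor m c a b * P) = c ^ ((xDegree m e : ℤ) - (b - 1 - a) * e a) := by
  have has : a ∈ Ico a b := mem_Ico.mpr ⟨le_rfl, hab⟩
  set d := onesOn (Ico a b)
  set e₀ := e - e a • d
  have hda : d a = 1 := by simp [d, onesOn_apply, hab]
  have he₀a : e₀ a = 0 := sub_nsmul_onesOn_apply_self has
  have hle : ∀ x ∈ Ico a b, e a ≤ e x := fun x hx => he (mem_Ico.mp hx).1
  have hxDegree : ∀ k : ℕ, (xDegree m (e₀ + k • d) : ℤ) = xDegree m e₀ + k * (b - a) := by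
    intro k
    rw [map_add, map_nsmul, xDegree_onesOn_Ico, smul_eq_mul]
    push_cast [Nat.cast_sub hab.le]
    ring
  have hray : ∀ k ≤ e a, coeff (e₀ + k • d) P = c ^ (xDegree m e₀ : ℤ) := by
    intro k hk
    have hk' := sub_nsmul_onesOn_add_nsmul hle hk
    rw [hP _ (hk' ▸ monotone_sub_nsmul_onesOn he hea (fun x y hax hxy hy =>
        mem_Ico.mpr ⟨hax, hxy.trans_lt (mem_Ico.mp hy).2⟩) _)
      (hk' ▸ fun _ => sub_nsmul_onesOn_apply_of_lt hea _), hxDegree, Finsupp.add_apply,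
      Finsupp.smul_apply, he₀a, hda]
    congr 1
    push_cast [smul_eq_mul]
    ring
  have hray₀ : coeff e₀ P = c ^ (xDegree m e₀ : ℤ) := by
    simpa using hray 0 (Nat.zero_le _)
  have hdecomp : e₀ + e a • d = e := by
    rw [sub_nsmul_onesOn_add_nsmul hle le_rfl, Nat.sub_self, zero_smul, tsub_zero]
  have hmul : (1 - monomial d c) * (corootFactor m c a b * P) = (1 - monomial d 1) * P := by
    rw [corootFactor_mul, mul_left_comm, one_sub_monomial_mul_inv_mul (onesOn_ne_zero has)]
  rw [← hdecomp, coeff_add_nsmul_of_coeff_const_on_ray hmul (not_onesOn_le has he₀a) (e a)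
      (fun k hk => by rw [hray k hk, hray₀]), hray₀, zpow_natCast, ← pow_add, ← zpow_natCast,
    hxDegree, Finsupp.add_apply, Finsupp.smul_apply, he₀a, hda]
  congr 1
  push_cast [smul_eq_mul]
  ring

lemma Ioi_castSucc_eq_insert {n : ℕ} (j : Fin n) :
    Ioi j.castSucc = insert j.succ (Ioi j.succ) := by
  ext k
  simp only [mem_Ioi, mem_insert, Fin.lt_def, Fin.ext_iff, Fin.val_castSucc, Fin.val_succ]
  omega

lemma coeff_prod_corootFactor_mul {a : Fin (m + 1)} {G : MvPowerSeries (Fin (m + 1)) K}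
    (hG : ∀ e : Fin (m + 1) →₀ ℕ, Monotone e → (∀ k < a, e k = 0) →
      coeff e G = c ^ ((xDegree m e : ℤ) - (m - a) * e a))
    (j : Fin (m + 1)) (haj : a ≤ j) {e : Fin (m + 1) →₀ ℕ} (he : Monotone e)
    (hea : ∀ k < a, e k = 0) :
    coeff e ((∏ b ∈ Ioi j, corootFactor m c a b) * G) =
      c ^ ((xDegree m e : ℤ) - (j - a) * e a) := by
  induction j using Fin.reverseInduction generalizing e with
  | last =>
    rw [Ioi_eq_empty.mpr fun b _ => Fin.le_last b, prod_empty, one_mul, hG e he hea,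
      Fin.val_last]
  | cast j ih =>
    have hab : a < j.succ := haj.trans_lt Fin.castSucc_lt_succ
    rw [Ioi_castSucc_eq_insert, prod_insert (fun h => lt_irrefl _ (mem_Ioi.mp h)), mul_assoc,
      coeff_corootFactor_mul m c hab (fun _ he hea => ih hab.le he hea) he hea, Fin.val_succ,
      Fin.val_castSucc]
    congr 1
    push_cast
    ring

lemma coeff_row_mul {a : Fin (m + 1)} {H : MvPowerSeries (Fin (m + 1)) K}
    (hH₀ : ∀ x : Fin (m + 1) →₀ ℕ, x a ≠ 0 → coeff x H = 0)
    (hH : ∀ e : Fin (m + 1) →₀ ℕ, Monotone e → (∀ k ≤ a, e k = 0) →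
      coeff e H = c ^ xDegree m e)
    {e : Fin (m + 1) →₀ ℕ} (he : Monotone e) (hea : ∀ k < a, e k = 0) :
    coeff e (row m c a * H) = c ^ xDegree m e := by
  rw [row, mul_assoc, coeff_prod_corootFactor_mul m c
    (fun _ he hea => coeff_inv_one_sub_z_mul m c hH₀ hH he hea) a le_rfl he hea, sub_self,
    zero_mul, sub_zero, zpow_natCast]

lemma coeff_rowsAfter (a : Fin (m + 1)) {e : Fin (m + 1) →₀ ℕ} (he : Monotone e)
    (hea : ∀ k ≤ a, e k = 0) : coeff e (rowsAfter m c a) = c ^ xDegree m e := by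
  induction a using Fin.reverseInduction generalizing e with
  | last =>
    obtain rfl : e = 0 := Finsupp.ext fun k => hea k (Fin.le_last k)
    rw [rowsAfter, Ioi_eq_empty.mpr fun b _ => Fin.le_last b, prod_empty, coeff_zero_one,
      map_zero, pow_zero]
  | cast j ih =>
    rw [rowsAfter, Ioi_castSucc_eq_insert, prod_insert (fun h => lt_irrefl _ (mem_Ioi.mp h))]
    exact coeff_row_mul m c (fun x hx => coeff_rowsAfter_eq_zero m c le_rfl hx) (fun _ => ih) he
      fun k hk => hea k (Fin.le_castSucc_iff.mpr hk)

lemma xDegree_partialSums (lam : Fin (m + 1) → ℕ) :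
    xDegree m (Finsupp.equivFunOnFinite.symm fun k => ∑ i ∈ Iic k, lam i) =
      ∑ i, (m - i) * lam i := by
  rw [xDegree_apply]
  simp only [Finsupp.coe_equivFunOnFinite_symm]
  rw [Finset.sum_comm' (t' := univ) (s' := fun i => Ico i (Fin.last m)) fun _ _ => by
    simp only [mem_Iio, mem_Iic, mem_univ, mem_Ico]; tauto]
  simp [Fin.card_Ico]

theorem inverse_satake_std_GLn (lam : Fin (m + 1) → ℕ) :
    MvPowerSeries.coeff (R := K)
      (Finsupp.equivFunOnFinite.symm fun k : Fin (m + 1) => ∑ i ∈ Finset.Iic k, lam i)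
      ((∏ i : Fin (m + 1), ∏ j ∈ Finset.Ioi i,
          (1 - mon m i j) * (1 - MvPowerSeries.C (σ := Fin (m + 1)) (R := K) q⁻¹ * mon m i j)⁻¹)
        * ∏ i : Fin (m + 1), (1 - z m i)⁻¹)
      = ∏ i : Fin (m + 1), q⁻¹ ^ ((m - (i : ℕ)) * lam i) := by
  have hrows : (∏ i : Fin (m + 1), ∏ j ∈ Ioi i,
      (1 - mon m i j) * (1 - C q⁻¹ * mon m i j)⁻¹) * ∏ i : Fin (m + 1), (1 - z m i)⁻¹ =
      row m q⁻¹ 0 * rowsAfter m q⁻¹ 0 := by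
    rw [← prod_mul_distrib, rowsAfter, mul_prod_Ioi_eq_prod_Ici, ← Finset.Ici_bot]
    rfl
  have hmono : Monotone fun k : Fin (m + 1) => ∑ i ∈ Iic k, lam i :=
    fun _ _ hkl => sum_le_sum_of_subset (Iic_subset_Iic.mpr hkl)
  rw [hrows, coeff_row_mul m q⁻¹ (fun _ hx => coeff_rowsAfter_eq_zero m q⁻¹ le_rfl hx)
    (fun _ he hea => coeff_rowsAfter m q⁻¹ 0 he hea) (by simpa using hmono)
    (fun k hk => absurd hk (Fin.not_lt_zero k)), xDegree_partialSums, prod_pow_eq_pow_sum]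

end InverseSatakeGLn
end
end

section
/- Let K = ℚ(q), let L_n be the Laurent polynomial ring over K in n variables with fraction field F_n, and let S_n act by permuting the variables. Then ∑_{σ∈S_n} σ( ∏_{1≤i<j≤n} (1 − q⁻¹ z_i z_j⁻¹)·(1 − z_i z_j⁻¹)⁻¹ ) is a constant, equal (as an element of K embedded in F_n) to ∏_{k=1}^{n} (1 − q^{−k})·(1 − q^{−1})⁻¹. -/
/-!
Writing `yᵢ = zᵢ⁻¹`, the factor attached to `i < j` is `(yᵢ - q⁻¹ yⱼ) / (yᵢ - yⱼ)`, so the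
claim is an identity between rational functions of distinct nonzero `y`'s. Sorting the
permutations `σ` of `Fin (m + 1)` by `σ 0 = v` splits the sum into
`∑_v ∏_{w ≠ v} (y_v - t y_w) / (y_v - y_w)` times the same sum for `m` variables. That first
factor is `1 + t + ⋯ + tᵐ`: the polynomial `∏_w (X - t y_w) - ∏_w (X - y_w)` has degree `≤ m`,
so it equals its Lagrange interpolant at the nodes `y`, and comparing the values at `X = 0`
gives the identity.
-/

noncomputable section

set_option synthInstance.maxHeartbeats 1000000

namespace InverseSatake

/-- The field `K = ℚ(q)` of rational functions over `ℚ`. -/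
abbrev K : Type := RatFunc ℚ

/-- The variable `q` of `K = ℚ(q)`. -/
abbrev q : K := RatFunc.X

/-- `L_n`: the Laurent polynomial ring over `K` in `n` variables, i.e. the group algebra
of `ℤ^n` over `K`. -/
abbrev Lau (n : ℕ) : Type := AddMonoidAlgebra K (Fin n → ℤ)

instance (n : ℕ) : IsDomain (Lau n) := NoZeroDivisors.to_isDomain _

/-- `F_n`: the field of fractions of `L_n`. -/
abbrev FF (n : ℕ) : Type _ := FractionRing (Lau n)

instance (n : ℕ) : Field (FF n) := inferInstance

variable {n : ℕ}

/-- The action of `σ ∈ S_n` on exponent vectors: `(σ·λ)ᵢ = λ_{σ⁻¹(i)}`. -/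
def permAddEquiv (σ : Equiv.Perm (Fin n)) : (Fin n → ℤ) ≃+ (Fin n → ℤ) where
  toFun v := v ∘ σ.symm
  invFun v := v ∘ σ
  left_inv v := by ext i; simp
  right_inv v := by ext i; simp
  map_add' v w := rfl

/-- The action of `S_n` on `L_n` by permuting the variables. -/
def actL (σ : Equiv.Perm (Fin n)) : Lau n ≃ₐ[K] Lau n :=
  AddMonoidAlgebra.domCongr K K (permAddEquiv σ)

/-- The action of `S_n` on `F_n` by permuting the variables. -/
def actF (σ : Equiv.Perm (Fin n)) : FF n ≃+* FF n :=
  IsFractionRing.ringEquivOfRingEquiv (actL σ).toRingEquiv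

/-- The exponent vector of the Laurent monomial `zᵢ z_j⁻¹`. -/
def eu (i j : Fin n) : Fin n → ℤ := Pi.single i 1 - Pi.single j 1

/-- The canonical embedding `L_n → F_n`. -/
def alg : Lau n →+* FF n := algebraMap (Lau n) (FF n)

end InverseSatake

section

open Finset Polynomial Lagrange Equiv

theorem Lagrange.sum_prod_erase_sub_mul_div_sub_eq_geom_sum {E ι : Type*} [Field E]
    [DecidableEq ι] {s : Finset ι} {x : ι → E} (hx : Set.InjOn x s) (hx0 : ∀ i ∈ s, x i ≠ 0)
    (t : E) :
    ∑ v ∈ s, ∏ w ∈ s.erase v, (x v - t * x w) / (x v - x w) = ∑ j ∈ range #s, t ^ j := by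
  have hsub : ∀ v ∈ s, ∀ w ∈ s.erase v, x v - x w ≠ 0 := fun v hv w hw =>
    sub_ne_zero.mpr fun h => (ne_of_mem_erase hw) (hx (mem_of_mem_erase hw) hv h.symm)
  rcases eq_or_ne t 1 with rfl | ht
  · rw [sum_congr rfl fun v hv => prod_eq_one fun w hw => by
      rw [one_mul, div_self (hsub v hv w hw)]]
    simp
  set f := nodal s (t • x) - nodal s x
  have hdeg : f.degree < #s := by
    rw [← degree_nodal (v := t • x)]
    exact degree_sub_lt_left (by rw [degree_nodal, degree_nodal]) nodal_monic.ne_zero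
      (nodal_monic.leadingCoeff.trans nodal_monic.leadingCoeff.symm)
  have h0 : ∀ i ∈ s, (0 : E) ≠ x i := fun i hi => (hx0 i hi).symm
  have hinterp := congrArg (eval 0) (eq_interpolate hx hdeg)
  rw [eval_interpolate_not_at_node _ h0] at hinterp
  have hlhs : eval 0 f = (t ^ #s - 1) * eval 0 (nodal s x) := by
    simp only [f, eval_sub, eval_nodal, Pi.smul_apply, smul_eq_mul, zero_sub]
    rw [sub_mul, one_mul, ← prod_const, ← prod_mul_distrib]
    simp only [mul_neg]
  have hterm : ∀ v ∈ s, nodalWeight s x v * (0 - x v)⁻¹ * eval (x v) f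
      = (t - 1) * ∏ w ∈ s.erase v, (x v - t * x w) / (x v - x w) := by
    intro v hv
    rw [eval_sub, eval_nodal_at_node hv, sub_zero, eval_nodal, ← mul_prod_erase s _ hv,
      nodalWeight]
    simp only [Pi.smul_apply, smul_eq_mul, div_eq_mul_inv, prod_mul_distrib]
    field_simp [hx0 v hv]
    ring
  rw [hlhs, sum_congr rfl hterm, ← mul_sum] at hinterp
  have hP : eval 0 (nodal s x) ≠ 0 := eval_nodal_not_at_node h0
  have hS : (t - 1) * ∑ v ∈ s, ∏ w ∈ s.erase v, (x v - t * x w) / (x v - x w) = t ^ #s - 1 :=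
    mul_left_cancel₀ hP (by rw [← hinterp]; ring)
  exact mul_left_cancel₀ (sub_ne_zero.mpr ht) (by rw [hS, mul_comm, geom_sum_mul])

theorem Fin.prod_swap_zero_succ {M : Type*} [CommMonoid M] {m : ℕ} (f : Fin (m + 1) → M)
    (v : Fin (m + 1)) : ∏ u : Fin m, f (swap 0 v u.succ) = ∏ w ∈ univ.erase v, f w := by
  have hIoi : Ioi (0 : Fin (m + 1)) = univ.erase 0 := by
    ext w
    simp
  have hmap : (univ.erase 0).map (swap 0 v).toEmbedding = univ.erase v := by
    rw [map_erase, map_univ_equiv, Equiv.coe_toEmbedding, swap_apply_left]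
  rw [← Fin.prod_Ioi_zero (fun w => f (swap 0 v w)), hIoi, ← hmap, prod_map]
  rfl

theorem Equiv.Perm.prod_Ioi_decomposeFin_symm {M : Type*} [CommMonoid M] {m : ℕ}
    (g : Fin (m + 1) → Fin (m + 1) → M) (v : Fin (m + 1)) (τ : Perm (Fin m)) :
    ∏ i, ∏ j ∈ Ioi i, g (decomposeFin.symm (v, τ) i) (decomposeFin.symm (v, τ) j)
      = (∏ w ∈ univ.erase v, g v w) *
        ∏ i, ∏ j ∈ Ioi i, g (swap 0 v (τ i).succ) (swap 0 v (τ j).succ) := by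
  rw [Fin.prod_univ_succ, Fin.prod_Ioi_zero]
  simp only [Perm.decomposeFin_symm_apply_zero, Perm.decomposeFin_symm_apply_succ,
    Fin.prod_Ioi_succ]
  rw [← Fin.prod_swap_zero_succ]
  congr 1
  exact Equiv.prod_comp τ fun u => g v (swap 0 v u.succ)

theorem Equiv.Perm.sum_prod_Ioi_succ {R : Type*} [CommSemiring R] {m : ℕ}
    (g : Fin (m + 1) → Fin (m + 1) → R) :
    ∑ σ : Perm (Fin (m + 1)), ∏ i, ∏ j ∈ Ioi i, g (σ i) (σ j)
      = ∑ v, (∏ w ∈ univ.erase v, g v w) *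
        ∑ τ : Perm (Fin m), ∏ i, ∏ j ∈ Ioi i, g (swap 0 v (τ i).succ) (swap 0 v (τ j).succ) := by
  rw [← decomposeFin.symm.sum_comp, Fintype.sum_prod_type]
  simp only [prod_Ioi_decomposeFin_symm, mul_sum]

theorem sum_perm_prod_Ioi_sub_mul_div_sub_eq_prod_geom_sum {E : Type*} [Field E] (t : E) {m : ℕ}
    {x : Fin m → E}     (hx : Function.Injective x) (hx0 : ∀ i, x i ≠ 0) :
    ∑ σ : Perm (Fin m), ∏ i, ∏ j ∈ Ioi i, (x (σ i) - t * x (σ j)) / (x (σ i) - x (σ j))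
      = ∏ k ∈ range m, ∑ j ∈ range (k + 1), t ^ j := by
  induction m with
  | zero => simp
  | succ m ih =>
    rw [Perm.sum_prod_Ioi_succ (fun v w => (x v - t * x w) / (x v - x w))]
    have hrest (v : Fin (m + 1)) := ih (x := fun u => x (swap 0 v u.succ))
      (hx.comp ((swap 0 v).injective.comp (Fin.succ_injective m))) fun _ => hx0 _
    simp only [hrest]
    rw [← sum_mul, sum_prod_erase_sub_mul_div_sub_eq_geom_sum hx.injOn fun i _ => hx0 i,
      card_univ, Fintype.card_fin, prod_range_succ, mul_comm]

end

namespace InverseSatake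

variable {n : ℕ}

open Finset AddMonoidAlgebra

lemma alg_injective : Function.Injective (alg (n := n)) :=
  IsFractionRing.injective _ _

lemma alg_algebraMap (c : K) : alg (algebraMap K (Lau n) c) = algebraMap K (FF n) c :=
  (IsScalarTower.algebraMap_apply K (Lau n) (FF n) c).symm

lemma q_inv_ne_one : q⁻¹ ≠ 1 := by
  rw [Ne, inv_eq_one]
  intro h
  exact Polynomial.X_ne_C (1 : ℚ) (RatFunc.algebraMap_injective ℚ (by simpa using h))

lemma actF_alg (σ : Equiv.Perm (Fin n)) (u : Lau n) : actF σ (alg u) = alg (actL σ u) :=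
  IsFractionRing.ringEquivOfRingEquiv_algebraMap _ u

def zInv (i : Fin n) : FF n := alg (single (-Pi.single i 1) 1)

lemma zInv_ne_zero (i : Fin n) : zInv i ≠ 0 :=
  (map_ne_zero_iff _ alg_injective).mpr (single_ne_zero.mpr one_ne_zero)

lemma zInv_injective : Function.Injective (zInv (n := n)) := by
  intro i j h
  have hsingle := congrFun (neg_injective (single_left_injective one_ne_zero (alg_injective h))) i
  by_contra hij
  simp [hij] at hsingle

lemma actF_algebraMap (σ : Equiv.Perm (Fin n)) (c : K) :
    actF σ (algebraMap K (FF n) c) = algebraMap K (FF n) c := by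
  rw [← alg_algebraMap, actF_alg, AlgEquiv.commutes]

lemma actF_zInv (σ : Equiv.Perm (Fin n)) (i : Fin n) : actF σ (zInv i) = zInv (σ i) := by
  rw [zInv, zInv, actF_alg, actL, domCongr_single]
  congr 2
  ext k
  simp [permAddEquiv, Pi.single_apply, Equiv.symm_apply_eq]

lemma alg_single_eu (i j : Fin n) (c : K) :
    alg (single (eu i j) c) = algebraMap K (FF n) c * zInv j / zInv i := by
  rw [eq_div_iff (zInv_ne_zero i), zInv, zInv, ← alg_algebraMap, ← map_mul, ← map_mul,
    ← Algebra.smul_def, single_mul_single, smul_single']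
  congr 2
  rw [eu]
  abel

lemma alg_one_sub_single_eu_mul_inv (i j : Fin n) (c : K) :
    alg (1 - single (eu i j) c) * (alg (1 - single (eu i j) 1))⁻¹
      = (zInv i - algebraMap K (FF n) c * zInv j) / (zInv i - zInv j) := by
  have := zInv_ne_zero i
  rw [map_sub, map_sub, map_one, alg_single_eu, alg_single_eu, map_one, one_mul]
  field_simp

/-- `P₀ = ∑_{σ ∈ S_n} σ( ∏_{i<j} (1 − q⁻¹ zᵢzⱼ⁻¹)(1 − zᵢzⱼ⁻¹)⁻¹ )` is the constant
`∏_{k=1}^{n} (1 − q^{−k})(1 − q^{−1})⁻¹ ∈ K` (the `q⁻¹`-Poincaré polynomial of `S_n`). -/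
theorem Pfun_zero_eq_poincare (n : ℕ) :
    ∑ σ : Equiv.Perm (Fin n),
      actF σ (∏ i : Fin n, ∏ j ∈ Finset.Ioi i,
        (alg (1 - AddMonoidAlgebra.single (eu i j) q⁻¹)
          * (alg (1 - AddMonoidAlgebra.single (eu i j) 1))⁻¹))
    = alg (algebraMap K (Lau n)
        (∏ k ∈ Finset.range n, ((1 - q⁻¹ ^ (k + 1)) * (1 - q⁻¹)⁻¹))) := by
  set T := algebraMap K (FF n) q⁻¹
  have hT : T ≠ 1 := by
    rw [Ne, ← map_one (algebraMap K (FF n)), (algebraMap K (FF n)).injective.eq_iff]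
    exact q_inv_ne_one
  calc _ = ∑ σ : Equiv.Perm (Fin n), ∏ i, ∏ j ∈ Ioi i,
          (zInv (σ i) - T * zInv (σ j)) / (zInv (σ i) - zInv (σ j)) := by
        simp only [alg_one_sub_single_eu_mul_inv]
        simp only [map_prod, map_div₀, map_sub, map_mul, actF_algebraMap, actF_zInv, T]
    _ = ∏ k ∈ range n, ∑ j ∈ range (k + 1), T ^ j :=
        sum_perm_prod_Ioi_sub_mul_div_sub_eq_prod_geom_sum T zInv_injective zInv_ne_zero
    _ = _ := by
        rw [alg_algebraMap, map_prod]
        refine prod_congr rfl fun k _ => ?_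
        rw [map_mul, map_inv₀, map_sub, map_sub, map_one, map_pow]
        rw [eq_mul_inv_iff_mul_eq₀ (sub_ne_zero.mpr hT.symm), geom_sum_mul_neg]

end InverseSatake
end
end

section
/- Fix n ≥ 1 and work in the formal power series ring over K = ℚ(q) in the n variables X₁,…,X_{n−1},U. For 1 ≤ i < j ≤ n set m_{ij} := X_i X_{i+1} ⋯ X_{j−1}, and for 1 ≤ i ≤ n set z_i := X_i X_{i+1} ⋯ X_{n−1} · U (so z_n = U). Set δ := (n−1, n−2, …, 1, 0) ∈ ℤ^n, and for σ ∈ S_n let N_σ := ∏_{k=1}^{n−1} X_k^{e_k(σ)} where e_k(σ) = ∑_{i=1}^{k} (δ_i − δ_{σ⁻¹(i)}) (these exponents are nonnegative). Then ∏_{1≤i<j≤n} (1 − m_{ij}) · ∏_{1≤i<j≤n} (1 − q⁻¹ m_{ij})⁻¹ · ∏_{i=1}^{n} (1 − z_i)⁻¹ = ( ∑_{σ∈S_n} sign(σ) · N_σ ) · ∏_{1≤i<j≤n} (1 − q⁻¹ m_{ij})⁻¹ · ∏_{i=1}^{n} (1 − z_i)⁻¹ as formal power series. -/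
noncomputable section

/-- The field `K = ℚ(q)` of rational functions over `ℚ`. -/
local notation "K" => RatFunc ℚ

/-- The variable `q` of `K = ℚ(q)`. -/
local notation "q" => (RatFunc.X : RatFunc ℚ)

namespace LiComparison

variable (m : ℕ)

/-- The `n = m + 1` variables `X₁, …, X_{n−1}, U` of the power series ring: the variable of
index `k < m` is `X_{k+1}`, and the variable of index `m` is `U`. -/
def V (k : Fin (m + 1)) : MvPowerSeries (Fin (m + 1)) K := MvPowerSeries.X k

/-- `m_{ij} = Xᵢ X_{i+1} ⋯ X_{j−1}` (zero-based). -/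
def mon (i j : Fin (m + 1)) : MvPowerSeries (Fin (m + 1)) K :=
  ∏ k ∈ Finset.Ico i j, V m k

/-- `z i = Xᵢ X_{i+1} ⋯ X_{n−1} · U` (zero-based; `z (last) = U`). -/
def z (i : Fin (m + 1)) : MvPowerSeries (Fin (m + 1)) K :=
  ∏ k ∈ Finset.Ici i, V m k

/-- `δ = (n−1, n−2, …, 1, 0) ∈ ℤ^n`, `n = m + 1`. -/
def delta (i : Fin (m + 1)) : ℤ := (m : ℤ) - (i : ℕ)

/-- The exponent `e_k(σ) = ∑_{i≤k} (δᵢ − δ_{σ⁻¹(i)})`. -/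
def e (k : Fin m) (σ : Equiv.Perm (Fin (m + 1))) : ℤ :=
  ∑ i ∈ Finset.Iic k.castSucc, (delta m i - delta m (σ.symm i))

/-- `N_σ = ∏_k X_k^{e_k(σ)}`, realizing the monomial `z^{δ−σδ}`. -/
def N (σ : Equiv.Perm (Fin (m + 1))) : MvPowerSeries (Fin (m + 1)) K :=
  ∏ k : Fin m, V m k.castSucc ^ (e m k σ).toNat

/-!
The factors involving `q⁻¹` and the `z i` are common to both sides, so the content is the Weyl
denominator formula `∏_{i<j} (1 - m_{ij}) = ∑_σ sign σ • N_σ`. Multiply it by the monomial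
`∏_j z_j ^ j`, which is a non-zero-divisor. Since `m_{ij} z_j = z_i`, the left side becomes the
Vandermonde determinant `∏_{i<j} (z_j - z_i)`; its Leibniz expansion is
`∑_σ sign σ • ∏_i z_i ^ σ⁻¹(i)`, and in the variables `Xₖ` the exponent of `∏_i z_i ^ σ⁻¹(i)`
exceeds that of `∏_i z_i ^ i` by `e_k(σ)` (and by `0` at `U`). The exponent `e_k(σ)` is
nonnegative because `k + 1` distinct naturals sum to at least `0 + 1 + ⋯ + k`.
-/

open Finset

theorem _root_.Finset.sum_range_card_le_sum (t : Finset ℕ) : ∑ n ∈ range #t, n ≤ ∑ x ∈ t, x := by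
  have h := sum_range_le_sum (s := t.map Nat.castEmbedding) (c := 0) (by simp)
  simp only [sum_map, card_map, Nat.castEmbedding_apply, zero_add] at h
  rwa [← Nat.cast_sum, ← Nat.cast_sum, Nat.cast_le] at h

theorem _root_.Fin.sum_Iic_val_le_sum_Iic_perm {n : ℕ} (σ : Equiv.Perm (Fin n)) (c : Fin n) :
    ∑ i ∈ Iic c, (i : ℕ) ≤ ∑ i ∈ Iic c, (σ i : ℕ) := by
  have h := sum_range_card_le_sum ((Iic c).map (σ.toEmbedding.trans Fin.valEmbedding))
  rwa [card_map, Fin.card_Iic, Nat.range_succ_eq_Iic, ← Fin.map_valEmbedding_Iic, sum_map,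
    sum_map] at h

theorem _root_.Finset.prod_prod_Ici_pow {α M : Type*} [CommMonoid M] [Preorder α] [Fintype α]
    [LocallyFiniteOrderTop α] [LocallyFiniteOrderBot α] (x : α → M) (a : α → ℕ) :
    ∏ i, (∏ k ∈ Ici i, x k) ^ a i = ∏ k, x k ^ ∑ i ∈ Iic k, a i := by
  simp_rw [← prod_pow, ← prod_pow_eq_pow_sum]
  exact prod_comm' (by simp)

theorem _root_.Fin.prod_prod_Ioi {M : Type*} [CommMonoid M] {n : ℕ} (f : Fin n → M) :
    ∏ i, ∏ j ∈ Ioi i, f j = ∏ j, f j ^ (j : ℕ) := by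
  rw [prod_comm' (t' := univ) (s' := Iio) (by simp)]
  simp [prod_const, Fin.card_Iio]

theorem mon_mul_z {i j : Fin (m + 1)} (h : i ≤ j) : mon m i j * z m j = z m i := by
  rw [mon, z, z, ← prod_union (disjoint_left.2 fun k hk hk' => ?_)]
  · congr 1
    ext k
    simp only [mem_union, mem_Ico, mem_Ici]
    grind
  · simp only [mem_Ico, mem_Ici] at hk hk'
    grind

theorem prod_z_pow (a : Fin (m + 1) → ℕ) :
    ∏ i, z m i ^ a i = ∏ k, V m k ^ ∑ i ∈ Iic k, a i :=
  prod_prod_Ici_pow (V m) a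

theorem prod_one_sub_mon_mul : (∏ i, ∏ j ∈ Ioi i, (1 - mon m i j)) * ∏ j, z m j ^ (j : ℕ) =
    (Matrix.vandermonde (z m)).det := by
  rw [Matrix.det_vandermonde, ← Fin.prod_prod_Ioi, ← prod_mul_distrib]
  refine prod_congr rfl fun i _ => ?_
  rw [← prod_mul_distrib]
  refine prod_congr rfl fun j hj => ?_
  rw [sub_mul, one_mul, mon_mul_z m (mem_Ioi.1 hj).le]

theorem e_eq_sub (k : Fin m) (σ : Equiv.Perm (Fin (m + 1))) :
    e m k σ = ((∑ i ∈ Iic k.castSucc, (σ.symm i : ℕ) : ℕ) : ℤ) -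
      ((∑ i ∈ Iic k.castSucc, (i : ℕ) : ℕ) : ℤ) := by
  simp [e, delta, sum_sub_distrib]

theorem e_nonneg (σ : Equiv.Perm (Fin (m + 1))) (k : Fin m) : 0 ≤ e m k σ := by
  rw [e_eq_sub, sub_nonneg, Nat.cast_le]
  exact Fin.sum_Iic_val_le_sum_Iic_perm σ.symm k.castSucc

theorem toNat_e_add (k : Fin m) (σ : Equiv.Perm (Fin (m + 1))) :
    (e m k σ).toNat + ∑ i ∈ Iic k.castSucc, (i : ℕ) = ∑ i ∈ Iic k.castSucc, (σ.symm i : ℕ) := by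
  have := e_nonneg m σ k
  rw [e_eq_sub] at this ⊢
  omega

theorem N_mul_prod_z_pow_val (σ : Equiv.Perm (Fin (m + 1))) :
    N m σ * ∏ i, z m i ^ (i : ℕ) = ∏ i, z m i ^ (σ.symm i : ℕ) := by
  have hlast : ∑ i ∈ Iic (Fin.last m), (i : ℕ) = ∑ i ∈ Iic (Fin.last m), (σ.symm i : ℕ) := by
    rw [← Fin.top_eq_last, Iic_top]
    exact (Equiv.sum_comp σ.symm (fun i => (i : ℕ))).symm
  rw [prod_z_pow, prod_z_pow, Fin.prod_univ_castSucc, Fin.prod_univ_castSucc, N, ← mul_assoc,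
    ← prod_mul_distrib, hlast]
  simp_rw [← pow_add, toNat_e_add]

theorem sum_sign_N_mul : (∑ σ : Equiv.Perm (Fin (m + 1)), (Equiv.Perm.sign σ : ℤ) • N m σ) *
    ∏ j, z m j ^ (j : ℕ) = (Matrix.vandermonde (z m)).det := by
  rw [Matrix.det_apply, sum_mul]
  refine sum_congr rfl fun σ _ => ?_
  rw [smul_mul_assoc, N_mul_prod_z_pow_val, Units.smul_def, ← Equiv.prod_comp σ]
  simp [Matrix.vandermonde]

theorem prod_one_sub_mon_eq_sum_sign_N :
    ∏ i, ∏ j ∈ Ioi i, (1 - mon m i j) =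
      ∑ σ : Equiv.Perm (Fin (m + 1)), (Equiv.Perm.sign σ : ℤ) • N m σ := by
  have hP : ∏ j, z m j ^ (j : ℕ) ∈ nonZeroDivisors (MvPowerSeries (Fin (m + 1)) K) := by
    rw [prod_z_pow]
    exact prod_mem fun k _ => pow_mem MvPowerSeries.X_mem_nonzeroDivisors _
  rw [← mul_cancel_right_mem_nonZeroDivisors hP, prod_one_sub_mon_mul, sum_sign_N_mul]

/-- The comparison of the author's inverse Satake formula with Wen-Wei Li's formula for the
standard `L`-function of `GL_n`, `n = m + 1`: the exponents `e_k(σ)` are nonnegative, and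
`∏_{i<j}(1 − m_{ij}) · ∏_{i<j}(1 − q⁻¹m_{ij})⁻¹ · ∏_i(1 − z_i)⁻¹
  = (∑_σ sign(σ) N_σ) · ∏_{i<j}(1 − q⁻¹m_{ij})⁻¹ · ∏_i(1 − z_i)⁻¹`
as formal power series (via the Weyl denominator formula). -/
theorem inverse_satake_eq_WWLi :
    (∀ (σ : Equiv.Perm (Fin (m + 1))) (k : Fin m), 0 ≤ e m k σ) ∧
    (∏ i : Fin (m + 1), ∏ j ∈ Finset.Ioi i, (1 - mon m i j))
        * (∏ i : Fin (m + 1), ∏ j ∈ Finset.Ioi i,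
            (1 - MvPowerSeries.C (σ := Fin (m + 1)) (R := K) q⁻¹ * mon m i j)⁻¹)
        * ∏ i : Fin (m + 1), (1 - z m i)⁻¹
      = (∑ σ : Equiv.Perm (Fin (m + 1)), (Equiv.Perm.sign σ : ℤ) • N m σ)
        * (∏ i : Fin (m + 1), ∏ j ∈ Finset.Ioi i,
            (1 - MvPowerSeries.C (σ := Fin (m + 1)) (R := K) q⁻¹ * mon m i j)⁻¹)
        * ∏ i : Fin (m + 1), (1 - z m i)⁻¹ := by
  exact ⟨e_nonneg m, by rw [prod_one_sub_mon_eq_sum_sign_N]⟩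

end LiComparison
end
end
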